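/- Let H be a finite simple hypergraph with e-index k, and let ℓ⁺ and ℓ⁻ denote the numbers of positive and negative eigenvalues of U(H) (with multiplicity). Then the independence number α(H) satisfies α(H) ≤ min(k − ℓ⁺, k − ℓ⁻). -/

import Mathlib

variable {V : Type} [Fintype V] [DecidableEq V]

/-- A finite hypergraph: a finite vertex set and a multiset of nonempty edges. -/
structure MultisetHypergraph (V : Type) [Fintype V] [DecidableEq V] where
  verts : Finset V
  edges : Multiset (Finset V)
  edges_sub : ∀ e ∈ edges, e ⊆ verts
  edges_nonempty : ∀ e ∈ edges, e.Nonempty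

open Classical in
/-- `IH H` is `I(H)`: all parts of 2-partitions of edges plus all singletons of `V(H)`. -/
noncomputable def IH (H : MultisetHypergraph V) : Finset (Finset V) :=
  Finset.univ.filter fun S =>
    (S.Nonempty ∧ ∃ e ∈ H.edges, S ⊂ e) ∨ ∃ v ∈ H.verts, S = {v}

/-- The unified matrix of a hypergraph, indexed by `I(H)`. -/
noncomputable def U (H : MultisetHypergraph V) : Matrix ↥(IH H) ↥(IH H) ℝ := fun S T =>
  if (S : Finset V) = (T : Finset V) then
    (if (S : Finset V).card = 1 then (H.edges.count (S : Finset V) : ℝ) else 0)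
  else if Disjoint (S : Finset V) (T : Finset V) then
    (H.edges.count ((S : Finset V) ∪ (T : Finset V)) : ℝ)
  else 0

/-- Degree of a vertex: number of edges (with multiplicity) containing it. -/
def deg (H : MultisetHypergraph V) (v : V) : ℕ := (H.edges.filter (fun e => v ∈ e)).card

/-- Unified degree of a set `S`: number of edges (with multiplicity) containing `S`. -/
def udeg (H : MultisetHypergraph V) (S : Finset V) : ℕ := (H.edges.filter (fun e => S ⊆ e)).card

/-- `incl H` = ∂(H): number of edges of cardinality ≥ 2 properly contained in another edge. -/
noncomputable def incl (H : MultisetHypergraph V) : ℕ :=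
  Multiset.card (H.edges.filter (fun e => 2 ≤ e.card ∧ ∃ e' ∈ H.edges, e ⊂ e'))

/-- A hypergraph is simple if it has no multiple edges and no loops. -/
def Simple (H : MultisetHypergraph V) : Prop :=
  H.edges.Nodup ∧ ∀ e ∈ H.edges, 2 ≤ e.card

/-- `tau S` = τ(S): the set of unordered 2-partitions of `S`. -/
def tau (S : Finset V) : Finset (Finset (Finset V)) :=
  (S.powerset.filter fun A => A.Nonempty ∧ A ⊂ S).image fun A => {A, S \ A}


/-!
Every entry of `U(H)` indexed by two subsets of an independent set `A` counts edges contained in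
`A`, so the singletons of `A` index a zero principal submatrix. The quadratic form of `U(H)` thus
vanishes on the coordinate subspace they span, while it is definite on the span of the eigenvectors
with positive (or with negative) eigenvalues. These subspaces meet trivially, so their dimensions
add up to at most `|I(H)|`.
-/

open Finset Module Submodule RealInnerProductSpace

section InnerProductSpace

variable {𝕜 E ι : Type*} [RCLike 𝕜] [NormedAddCommGroup E] [InnerProductSpace 𝕜 E] {v : ι → E}

theorem Orthonormal.inner_eq_zero_of_mem_span_image (hv : Orthonormal 𝕜 v) {s : Set ι} {i : ι}
    (hi : i ∉ s) {x : E} (hx : x ∈ span 𝕜 (v '' s)) : inner 𝕜 (v i) x = 0 := by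
  obtain ⟨l, hl, rfl⟩ := (Finsupp.mem_span_image_iff_linearCombination 𝕜).1 hx
  exact inner_eq_zero_symm.1 (hv.inner_finsupp_eq_zero hi hl)

theorem Orthonormal.finrank_span_image (hv : Orthonormal 𝕜 v) (s : Finset ι) :
    finrank 𝕜 (span 𝕜 (v '' s)) = s.card := by
  rw [Set.image_eq_range]
  exact (finrank_span_eq_card (hv.linearIndependent.comp _ Subtype.val_injective)).trans
    (Fintype.card_coe s)

end InnerProductSpace

theorem eq_zero_of_sum_mul_sq_eq_zero {ι : Type*} {J : Finset ι} {c y : ι → ℝ}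
    (hc : (∀ j ∈ J, 0 < c j) ∨ (∀ j ∈ J, c j < 0)) (h : ∑ j ∈ J, c j * y j ^ 2 = 0) :
    ∀ j ∈ J, y j = 0 := by
  wlog hpos : ∀ j ∈ J, 0 < c j generalizing c
  · refine this (c := -c) (Or.inl fun j hj => neg_pos.2 (hc.resolve_left hpos j hj)) ?_
      fun j hj => neg_pos.2 (hc.resolve_left hpos j hj)
    simp [neg_mul, sum_neg_distrib, h]
  intro j hj
  have := (sum_eq_zero_iff_of_nonneg fun i hi => mul_nonneg (hpos i hi).le (sq_nonneg _)).1 h j hj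
  simpa [(hpos j hj).ne'] using this

namespace Matrix

variable {ι : Type*} [Fintype ι]

theorem dotProduct_mulVec_eq_zero_of_support_subset {R : Type*} [NonUnitalNonAssocSemiring R]
    {N : Matrix ι ι R} {T : Finset ι} (hT : ∀ i ∈ T, ∀ j ∈ T, N i j = 0) {x : ι → R}
    (hx : ∀ i ∉ T, x i = 0) : x ⬝ᵥ N *ᵥ x = 0 := by
  refine sum_eq_zero fun i _ => ?_
  by_cases hi : i ∈ T
  · refine mul_eq_zero_of_right _ (sum_eq_zero fun j _ => ?_)
    by_cases hj : j ∈ T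
    · simp [hT i hi j hj]
    · simp [hx j hj]
  · simp [hx i hi]

variable [DecidableEq ι] {M : Matrix ι ι ℝ}

theorem IsHermitian.dotProduct_mulVec_eq_sum (hM : M.IsHermitian) (x : EuclideanSpace ℝ ι) :
    x.ofLp ⬝ᵥ M *ᵥ x.ofLp = ∑ j, hM.eigenvalues j * ⟪hM.eigenvectorBasis j, x⟫ ^ 2 := by
  set b := hM.eigenvectorBasis
  have hMx : M *ᵥ x.ofLp = ∑ j, (hM.eigenvalues j * ⟪b j, x⟫) • (b j).ofLp := by
    conv_lhs => rw [← b.sum_repr' x]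
    simp only [WithLp.ofLp_sum, WithLp.ofLp_smul, mulVec_sum, mulVec_smul]
    exact sum_congr rfl fun j _ => by rw [hM.mulVec_eigenvectorBasis, smul_smul, mul_comm]
  rw [hMx, dotProduct_sum]
  refine sum_congr rfl fun j _ => ?_
  rw [dotProduct_smul, EuclideanSpace.inner_eq_star_dotProduct, star_trivial, smul_eq_mul]
  ring

theorem IsHermitian.card_add_finrank_le_of_isotropic (hM : M.IsHermitian) {J : Finset ι}
    (hJ : (∀ j ∈ J, 0 < hM.eigenvalues j) ∨ (∀ j ∈ J, hM.eigenvalues j < 0))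
    {W : Submodule ℝ (EuclideanSpace ℝ ι)} (hW : ∀ x ∈ W, x.ofLp ⬝ᵥ M *ᵥ x.ofLp = 0) :
    J.card + finrank ℝ W ≤ Fintype.card ι := by
  set b := hM.eigenvectorBasis
  have hdisj : Disjoint (span ℝ (b '' J)) W := by
    rw [disjoint_def]
    intro x hxJ hxW
    have hout : ∀ j ∉ J, ⟪b j, x⟫ = 0 := fun j hj =>
      b.orthonormal.inner_eq_zero_of_mem_span_image (by simpa using hj) hxJ
    have hsum : ∑ j ∈ J, hM.eigenvalues j * ⟪b j, x⟫ ^ 2 = 0 := by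
      rw [← hW x hxW, hM.dotProduct_mulVec_eq_sum,
        sum_subset (subset_univ J) fun j _ hj => by simp [hout j hj]]
    have hin := eq_zero_of_sum_mul_sq_eq_zero hJ hsum
    rw [← b.sum_repr' x]
    refine sum_eq_zero fun j _ => ?_
    by_cases hj : j ∈ J
    · simp [hin j hj]
    · simp [hout j hj]
  have := finrank_add_finrank_le_of_disjoint hdisj
  rwa [b.orthonormal.finrank_span_image, finrank_euclideanSpace] at this

theorem IsHermitian.card_add_card_le_of_principal_zero (hM : M.IsHermitian) {J T : Finset ι}
    (hJ : (∀ j ∈ J, 0 < hM.eigenvalues j) ∨ (∀ j ∈ J, hM.eigenvalues j < 0))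
    (hT : ∀ i ∈ T, ∀ j ∈ T, M i j = 0) :
    J.card + T.card ≤ Fintype.card ι := by
  let e := EuclideanSpace.basisFun ι ℝ
  have := hM.card_add_finrank_le_of_isotropic hJ (W := span ℝ (e '' T)) fun x hx =>
    dotProduct_mulVec_eq_zero_of_support_subset hT fun i hi =>
      (EuclideanSpace.basisFun_inner ι ℝ x i).symm.trans
        (e.orthonormal.inner_eq_zero_of_mem_span_image (by simpa using hi) hx)
  rwa [e.orthonormal.finrank_span_image] at this

end Matrix

section Hypergraph

variable {H : MultisetHypergraph V}

theorem singleton_mem_IH {v : V} (hv : v ∈ H.verts) : {v} ∈ IH H := by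
  simp [IH, hv]

theorem U_apply_eq_zero_of_union_subset {A : Finset V} (hA : ∀ e ∈ H.edges, ¬ e ⊆ A)
    {S T : IH H} (hST : (S : Finset V) ∪ T ⊆ A) : U H S T = 0 := by
  have hS : (S : Finset V) ∉ H.edges := fun h => hA _ h (subset_union_left.trans hST)
  have hST' : (S : Finset V) ∪ T ∉ H.edges := fun h => hA _ h hST
  simp only [U]
  split_ifs <;> simp [hS, hST']

end Hypergraph

theorem independence_number_bound_general (H : MultisetHypergraph V)
    (hU : (U H).IsHermitian) (A : Finset V) (hA : A ⊆ H.verts)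
    (hind : ∀ e ∈ H.edges, ¬ e ⊆ A) :
    A.card ≤
      min (Fintype.card ↥(IH H) -
            (Finset.univ.filter (fun i : ↥(IH H) => 0 < hU.eigenvalues i)).card)
          (Fintype.card ↥(IH H) -
            (Finset.univ.filter (fun i : ↥(IH H) => hU.eigenvalues i < 0)).card) := by
  let T : Finset (IH H) := A.attach.image fun v => ⟨{v.1}, singleton_mem_IH (hA v.2)⟩
  have hTcard : T.card = A.card := by
    refine (card_image_of_injective _ fun u v huv => ?_).trans A.card_attach
    exact Subtype.ext (singleton_injective (congrArg Subtype.val huv))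
  have hT : ∀ S ∈ T, ∀ S' ∈ T, U H S S' = 0 := by
    simp only [T, mem_image, mem_attach, true_and]
    rintro _ ⟨u, rfl⟩ _ ⟨v, rfl⟩
    exact U_apply_eq_zero_of_union_subset hind (by simp [insert_subset_iff, u.2, v.2])
  have hpos := hU.card_add_card_le_of_principal_zero (J := univ.filter (0 < hU.eigenvalues ·))
    (Or.inl fun j hj => (mem_filter.1 hj).2) hT
  have hneg := hU.card_add_card_le_of_principal_zero (J := univ.filter (hU.eigenvalues · < 0))
    (Or.inr fun j hj => (mem_filter.1 hj).2) hT
  omega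

theorem independence_number_bound (H : MultisetHypergraph V) (hs : Simple H)
    (hU : (U H).IsHermitian) (A : Finset V) (hA : A ⊆ H.verts)
    (hind : ∀ e ∈ H.edges, ¬ e ⊆ A) :
    A.card ≤
      min (Fintype.card ↥(IH H) -
            (Finset.univ.filter (fun i : ↥(IH H) => 0 < hU.eigenvalues i)).card)
          (Fintype.card ↥(IH H) -
            (Finset.univ.filter (fun i : ↥(IH H) => hU.eigenvalues i < 0)).card) :=
  independence_number_bound_general H hU A hA hind
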